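/- arXiv:1912.00593 — 6 statements merged into one kernel-verified Lean document; each statement's English description precedes it below -/
import Mathlib

section
/- Let v, b ∈ ℂ^n and u ∈ ℕ^n, and set e = |nsupp(v−u) \ nsupp(v)|. Then in the polynomial [v+sb]_u ∈ ℂ[s], the coefficient of s^k is zero for every k < e, and the coefficient of s^e equals (∏_{i ∈ nsupp(v−u)\nsupp(v)} b_i) · [v]^_u; that is, [v+sb]_u = (∏_{i ∈ nsupp(v−u)\nsupp(v)} b_i) · [v]^_u · s^e + o(s^e). (Lemma 5.1.) -/
/-!
A factor `v i - k + s b i` of `[v + s b]_u` is the monomial `b i s` exactly when `v i = k`.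
For fixed `i` this happens for at most one `k < u i`, and it happens for some such `k` exactly
when `v i - u i` is a negative integer while `v i` is not. Hence
`[v + s b]_u = (∏_{i ∈ nsupp(v-u) \ nsupp(v)} b i) · s ^ e · Q(s)`, where `Q` is the product of
the remaining factors, and `Q(0) = [v]^_u`.
-/

open scoped Classical

/-- The negative support of `v`: indices where `v i` is a negative integer. -/
noncomputable def nsupp {n : ℕ} (v : Fin n → ℂ) : Finset (Fin n) :=
  Finset.univ.filter (fun i => ∃ m : ℤ, m < 0 ∧ v i = (m : ℂ))

/-- The falling factorial `[v]_u = ∏_i ∏_{k=0}^{u_i - 1} (v_i - k)`. -/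
noncomputable def ffall {n : ℕ} (v : Fin n → ℂ) (u : Fin n → ℕ) : ℂ :=
  ∏ i, ∏ k ∈ Finset.range (u i), (v i - (k : ℂ))

/-- The reduced falling factorial: the product of the nonzero factors of `[v]_u`. -/
noncomputable def redffall {n : ℕ} (v : Fin n → ℂ) (u : Fin n → ℕ) : ℂ :=
  ∏ i, ∏ k ∈ (Finset.range (u i)).filter (fun k : ℕ => v i - (k : ℂ) ≠ 0), (v i - (k : ℂ))

/-- The polynomial `[v + s b]_u = ∏_i ∏_{k=0}^{u_i - 1} (v_i - k + s b_i)` in `ℂ[s]`. -/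
noncomputable def pertFF {n : ℕ} (v b : Fin n → ℂ) (u : Fin n → ℕ) : Polynomial ℂ :=
  ∏ i, ∏ k ∈ Finset.range (u i),
    (Polynomial.C (v i - (k : ℂ)) + Polynomial.C (b i) * Polynomial.X)

open Polynomial Finset

theorem prod_C_add_C_mul_X_eq_pow_mul {R ι : Type*} [CommRing R] (s : Finset ι) (f : ι → R)
    (c : R) :
    ∏ k ∈ s, (C (f k) + C c * X) =
      (C c * X) ^ #{k ∈ s | f k = 0} * ∏ k ∈ s with f k ≠ 0, (C (f k) + C c * X) := by
  rw [← prod_filter_mul_prod_filter_not s (fun k => f k = 0)]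
  congr 1
  rw [prod_congr rfl fun k hk => by rw [(mem_filter.mp hk).2, map_zero, zero_add], prod_const]

theorem card_filter_range_sub_natCast_eq_zero {R : Type*} [Ring R] [CharZero R] (z : R)
    (m : ℕ) : #{k ∈ range m | z - (k : ℕ) = 0} = if ∃ k : ℕ, k < m ∧ z = k then 1 else 0 := by
  split_ifs with h
  · obtain ⟨k, hk, rfl⟩ := h
    rw [card_eq_one]
    refine ⟨k, ext fun j => ?_⟩
    simp only [mem_filter, mem_range, sub_eq_zero, Nat.cast_inj, mem_singleton]
    exact ⟨fun h => h.2.symm, fun h => ⟨h ▸ hk, h.symm⟩⟩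
  · rw [card_eq_zero, filter_eq_empty_iff]
    exact fun k hk hz => h ⟨k, mem_range.mp hk, sub_eq_zero.mp hz⟩

theorem mem_nsupp_sub_sdiff_nsupp_iff {n : ℕ} (v : Fin n → ℂ) (u : Fin n → ℕ) (i : Fin n) :
    i ∈ nsupp (fun i => v i - (u i : ℂ)) \ nsupp v ↔ ∃ k < u i, v i = k := by
  simp only [nsupp, mem_sdiff, mem_filter, mem_univ, true_and]
  constructor
  · rintro ⟨⟨m, hm, hvm⟩, hnot⟩
    have hvi : v i = ((m + u i : ℤ) : ℂ) := by push_cast; linear_combination hvm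
    have hnonneg : 0 ≤ m + u i := by
      by_contra h
      exact hnot ⟨m + u i, by omega, hvi⟩
    refine ⟨(m + u i).toNat, by omega, ?_⟩
    rw [hvi]
    exact_mod_cast (Int.toNat_of_nonneg hnonneg).symm
  · rintro ⟨k, hk, hvk⟩
    refine ⟨⟨k - u i, by omega, by push_cast; linear_combination hvk⟩, ?_⟩
    rintro ⟨m, hm, hvm⟩
    have : (k : ℤ) = m := by exact_mod_cast hvk ▸ hvm
    omega

noncomputable def redPertFF {n : ℕ} (v b : Fin n → ℂ) (u : Fin n → ℕ) : ℂ[X] :=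
  ∏ i, ∏ k ∈ (range (u i)).filter (fun k : ℕ => v i - (k : ℂ) ≠ 0),
    (C (v i - k) + C (b i) * X)

theorem pertFF_eq_C_mul_redPertFF_mul_X_pow {n : ℕ} (v b : Fin n → ℂ) (u : Fin n → ℕ) :
    pertFF v b u =
      C (∏ i ∈ nsupp (fun i => v i - (u i : ℂ)) \ nsupp v, b i) * redPertFF v b u *
        X ^ #(nsupp (fun i => v i - (u i : ℂ)) \ nsupp v) := by
  have hzeros : ∀ i, (C (b i) * X) ^ #{k ∈ range (u i) | v i - (k : ℕ) = 0} =
      if i ∈ nsupp (fun i => v i - (u i : ℂ)) \ nsupp v then C (b i) * X else 1 := by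
    intro i
    simp only [card_filter_range_sub_natCast_eq_zero, mem_nsupp_sub_sdiff_nsupp_iff]
    split_ifs <;> simp
  simp_rw [pertFF, prod_C_add_C_mul_X_eq_pow_mul (range _), hzeros, prod_mul_distrib,
    prod_ite_mem, univ_inter, prod_mul_distrib, prod_const, map_prod, redPertFF]
  ring

theorem redPertFF_coeff_zero {n : ℕ} (v b : Fin n → ℂ) (u : Fin n → ℕ) :
    (redPertFF v b u).coeff 0 = redffall v u := by
  simp only [coeff_zero_eq_eval_zero, redPertFF, redffall, eval_prod, eval_add, eval_C, eval_mul,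
    eval_X, mul_zero, add_zero]

theorem pertFF_lowest_coeff_general {n : ℕ} (v b : Fin n → ℂ) (u : Fin n → ℕ)
    (e : ℕ) (he : e = ((nsupp (fun i => v i - (u i : ℂ))) \ nsupp v).card) :
    (∀ k < e, (pertFF v b u).coeff k = 0) ∧
    (pertFF v b u).coeff e =
      (∏ i ∈ (nsupp (fun i => v i - (u i : ℂ))) \ nsupp v, b i) * redffall v u := by
  rw [pertFF_eq_C_mul_redPertFF_mul_X_pow, ← he]
  refine ⟨fun k hk => ?_, ?_⟩
  · rw [coeff_mul_X_pow', if_neg (by omega)]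
  · rw [coeff_mul_X_pow', if_pos le_rfl, Nat.sub_self, mul_coeff_zero, coeff_C_zero,
      redPertFF_coeff_zero]

/-- Lemma 5.1: the coefficient of `s^k` in `[v+sb]_u` vanishes for
`k < e = |nsupp(v-u) \ nsupp(v)|`, and the coefficient of `s^e` equals
`(∏_{i ∈ nsupp(v-u)\nsupp(v)} b_i) · [v]^_u`. -/
theorem pertFF_lowest_coeff {n : ℕ} (hn : 0 < n) (v b : Fin n → ℂ) (u : Fin n → ℕ)
    (e : ℕ) (he : e = ((nsupp (fun i => v i - (u i : ℂ))) \ nsupp v).card) :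
    (∀ k < e, (pertFF v b u).coeff k = 0) ∧
    (pertFF v b u).coeff e =
      (∏ i ∈ (nsupp (fun i => v i - (u i : ℂ))) \ nsupp v, b i) * redffall v u :=
  pertFF_lowest_coeff_general v b u e he
end

section
/- For every v ∈ ℂ^n and u ∈ ℤ^n, one has the equality of sets nsupp(v − u₋) \ nsupp(v) = nsupp(v + u) \ nsupp(v). (This set identity is the key step in the proof of Corollary 5.2.) -/
open scoped Classical

lemma mem_nsupp {n : ℕ} {v : Fin n → ℂ} {i : Fin n} :
    i ∈ nsupp v ↔ ∃ m : ℤ, m < 0 ∧ v i = m := by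
  simp [nsupp]

lemma exists_neg_intCast_of_add_eq {z : ℂ} {k : ℤ} (hk : 0 ≤ k)
    (h : ∃ m : ℤ, m < 0 ∧ z + k = m) : ∃ m : ℤ, m < 0 ∧ z = m := by
  obtain ⟨m, hm, hz⟩ := h
  exact ⟨m - k, by omega, by push_cast; linear_combination hz⟩

lemma natCast_toNat_neg_of_neg {k : ℤ} (hk : k < 0) : (((-k).toNat : ℕ) : ℂ) = -(k : ℂ) := by
  rw [← Int.cast_natCast, Int.toNat_of_nonneg (by omega), Int.cast_neg]

theorem nsupp_sub_negPart_sdiff_eq_general {n : ℕ} (v : Fin n → ℂ) (u : Fin n → ℤ) :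
    nsupp (fun i => v i - (((-(u i)).toNat : ℕ) : ℂ)) \ nsupp v
      = nsupp (fun i => v i + ((u i : ℤ) : ℂ)) \ nsupp v := by
  ext i
  simp only [Finset.mem_sdiff, mem_nsupp]
  rcases lt_or_ge (u i) 0 with hu | hu
  · rw [natCast_toNat_neg_of_neg hu, sub_neg_eq_add]
  · -- both sides are empty, since `v + u` can only be a negative integer where `v` is
    rw [Int.toNat_eq_zero.mpr (by omega), Nat.cast_zero, sub_zero]
    exact ⟨fun h => absurd h.1 h.2, fun h => absurd (exists_neg_intCast_of_add_eq hu h.1) h.2⟩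

/-- `nsupp(v − u₋) \ nsupp(v) = nsupp(v + u) \ nsupp(v)`
(key step in the proof of Corollary 5.2). -/
theorem nsupp_sub_negPart_sdiff_eq {n : ℕ} (hn : 0 < n) (v : Fin n → ℂ) (u : Fin n → ℤ) :
    nsupp (fun i => v i - (((-(u i)).toNat : ℕ) : ℂ)) \ nsupp v
      = nsupp (fun i => v i + ((u i : ℤ) : ℂ)) \ nsupp v :=
  nsupp_sub_negPart_sdiff_eq_general v u
end

section
/- Let v ∈ ℂ^n, u ∈ ℤ^n, and b ∈ ℂ^n with b_j ≠ 0 for every j. Then the polynomial [v+sb]_{u₋} ∈ ℂ[s] is nonzero and ord_s([v+sb]_{u₋}) = |nsupp(v+u) \ nsupp(v)|. (Corollary 5.2 (1).) -/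
open scoped Classical

/-!
The factor `v_i - k + s b_i` of `[v + s b]_{u₋}` has order `1` in `s` when `v_i = k` and order
`0` otherwise, so the order of the product counts the pairs `(i, k)` with `k < (u₋)_i` and
`v_i = k`. For each `i` there is at most one such `k`, and there is one exactly when `v_i` is a
natural number pushed to a negative integer by adding `u_i`, i.e. when `i ∈ nsupp(v+u) \ nsupp(v)`.
-/

open Polynomial Finset

namespace Polynomial

theorem natTrailingDegree_prod {R ι : Type*} [CommRing R] [IsDomain R] (s : Finset ι)
    (f : ι → R[X]) (h : ∀ i ∈ s, f i ≠ 0) :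
    (∏ i ∈ s, f i).natTrailingDegree = ∑ i ∈ s, (f i).natTrailingDegree := by
  induction s using Finset.induction with
  | empty => simp
  | insert a s ha ih =>
    rw [prod_insert ha, sum_insert ha, natTrailingDegree_mul (h a (mem_insert_self a s))
        (prod_ne_zero_iff.2 fun i hi => h i (mem_insert_of_mem hi)),
      ih fun i hi => h i (mem_insert_of_mem hi)]

variable {R : Type*}

theorem C_add_C_mul_X_ne_zero [Semiring R] (c : R) {b : R} (hb : b ≠ 0) :
    C c + C b * X ≠ 0 := by
  intro h
  exact hb (by simpa using congrArg (coeff · 1) h)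

theorem natTrailingDegree_C_add_C_mul_X [Semiring R] (c : R) {b : R} (hb : b ≠ 0) :
    (C c + C b * X).natTrailingDegree = if c = 0 then 1 else 0 := by
  split_ifs with hc
  · rw [hc, map_zero, zero_add, C_mul_X_eq_monomial, natTrailingDegree_monomial hb]
  · exact natTrailingDegree_eq_zero_of_constantCoeff_ne_zero (by simpa using hc)

theorem natTrailingDegree_prod_range_C_sub_natCast_add_C_mul_X [CommRing R] [IsDomain R]
    [CharZero R] (z : R) {b : R} (hb : b ≠ 0) (N : ℕ) :
    (∏ k ∈ range N, (C (z - k) + C b * X)).natTrailingDegree =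
      if ∃ k : ℕ, k < N ∧ z = k then 1 else 0 := by
  rw [natTrailingDegree_prod _ _ fun k _ => C_add_C_mul_X_ne_zero _ hb]
  simp_rw [natTrailingDegree_C_add_C_mul_X _ hb, sub_eq_zero]
  rw [← card_filter]
  split_ifs with hz
  · obtain ⟨k, hkN, rfl⟩ := hz
    rw [card_eq_one]
    refine ⟨k, eq_singleton_iff_unique_mem.2 ⟨by simpa using hkN, fun j hj => ?_⟩⟩
    exact_mod_cast ((mem_filter.1 hj).2).symm
  · rw [card_eq_zero, filter_eq_empty_iff]
    exact fun k hk hzk => hz ⟨k, mem_range.1 hk, hzk⟩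

end Polynomial

theorem exists_natCast_eq_lt_toNat_neg_iff {R : Type*} [Ring R] [CharZero R] (z : R) (d : ℤ) :
    (∃ k : ℕ, k < (-d).toNat ∧ z = k) ↔
      (∃ m : ℤ, m < 0 ∧ z + d = m) ∧ ¬ ∃ m : ℤ, m < 0 ∧ z = m := by
  constructor
  · rintro ⟨k, hk, rfl⟩
    refine ⟨⟨k + d, by omega, by push_cast; rfl⟩, ?_⟩
    rintro ⟨m, hm, hkm⟩
    have : (k : ℤ) = m := by exact_mod_cast hkm
    omega
  · rintro ⟨⟨m, hm, hzm⟩, hz⟩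
    have hz_eq : z = ((m - d : ℤ) : R) := by rw [Int.cast_sub, ← hzm, add_sub_cancel_right]
    have hnonneg : 0 ≤ m - d := not_lt.1 fun hneg => hz ⟨m - d, hneg, hz_eq⟩
    obtain ⟨k, hk⟩ := Int.eq_ofNat_of_zero_le hnonneg
    exact ⟨k, by omega, by rw [hz_eq, hk, Int.cast_natCast]⟩

theorem mem_nsupp_add_intCast_sdiff_nsupp_iff {n : ℕ} (v : Fin n → ℂ) (u : Fin n → ℤ)
    (i : Fin n) :
    i ∈ nsupp (fun i => v i + ((u i : ℤ) : ℂ)) \ nsupp v ↔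
      ∃ k : ℕ, k < (-(u i)).toNat ∧ v i = k := by
  simp only [mem_sdiff, nsupp, mem_filter, mem_univ, true_and]
  exact (exists_natCast_eq_lt_toNat_neg_iff (v i) (u i)).symm

theorem ord_pertFF_negPart_general {n : ℕ} (v b : Fin n → ℂ) (u : Fin n → ℤ)
    (hb : ∀ j, b j ≠ 0) :
    pertFF v b (fun i => (-(u i)).toNat) ≠ 0 ∧
    (pertFF v b (fun i => (-(u i)).toNat)).natTrailingDegree =
      ((nsupp (fun i => v i + ((u i : ℤ) : ℂ))) \ nsupp v).card := by
  have hblock (i : Fin n) : ∏ k ∈ range (-(u i)).toNat, (C (v i - k) + C (b i) * X) ≠ 0 :=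
    prod_ne_zero_iff.2 fun _ _ => C_add_C_mul_X_ne_zero _ (hb i)
  refine ⟨prod_ne_zero_iff.2 fun i _ => hblock i, ?_⟩
  rw [pertFF, natTrailingDegree_prod _ _ fun i _ => hblock i]
  simp_rw [natTrailingDegree_prod_range_C_sub_natCast_add_C_mul_X _ (hb _),
    ← mem_nsupp_add_intCast_sdiff_nsupp_iff]
  rw [sum_boole, filter_mem_eq_inter, univ_inter, Nat.cast_id]

/-- Corollary 5.2 (1): if `b_j ≠ 0` for all `j`, then `[v+sb]_{u₋}` is a
nonzero polynomial with `ord_s([v+sb]_{u₋}) = |nsupp(v+u) \ nsupp(v)|`. -/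
theorem ord_pertFF_negPart {n : ℕ} (hn : 0 < n) (v b : Fin n → ℂ) (u : Fin n → ℤ)
    (hb : ∀ j, b j ≠ 0) :
    pertFF v b (fun i => (-(u i)).toNat) ≠ 0 ∧
    (pertFF v b (fun i => (-(u i)).toNat)).natTrailingDegree =
      ((nsupp (fun i => v i + ((u i : ℤ) : ℂ))) \ nsupp v).card :=
  ord_pertFF_negPart_general v b u hb
end

section
/- Let v ∈ ℂ^n, u ∈ ℤ^n, and b ∈ ℂ^n with b_j ≠ 0 for every j, and set I₀ = nsupp(v) and I = nsupp(v+u). Then both polynomials [v+sb]_{u₋} and [v+u+sb]_{u₊} are nonzero, the reduced falling factorial [v+u]^_{u₊} is nonzero, and the ratio of their trailing coefficients satisfies tc([v+sb]_{u₋}) / tc([v+u+sb]_{u₊}) = ((∏_{i∈I\I₀} b_i)/(∏_{j∈I₀\I} b_j)) · ([v]^_{u₋} / [v+u]^_{u₊}). (Corollary 5.3, leading-coefficient statement.) -/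
open scoped Classical

/-! Each factor `(v_i - k) + s b_i` of `[v + s b]_w` contributes its constant term to the trailing
coefficient, or `b_i` when that constant vanishes, which happens for at most one `k` per index `i`.
Hence `tc [v + s b]_w = [v]^_w · ∏ b_i`, the product running over the indices with
`v_i ∈ {0, …, w_i - 1}`. For `[v + s b]_{u₋}` these are the indices that enter the negative support
when passing from `v` to `v + u`, and for `[v + u + s b]_{u₊}` those that leave it. -/

namespace Polynomial

variable {R : Type*}

theorem trailingCoeff_C_add_C_mul_X [Semiring R] [DecidableEq R] (a b : R) :
    (C a + C b * X).trailingCoeff = if a = 0 then b else a := by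
  split_ifs with ha
  · subst ha
    by_cases hb : b = 0
    · simp [hb]
    · rw [C_0, zero_add, C_mul_X_eq_monomial, trailingCoeff, natTrailingDegree_monomial hb,
        coeff_monomial_same]
  · rw [trailingCoeff_eq_coeff_zero (by simpa using ha)]
    simp

theorem trailingCoeff_prod [CommSemiring R] [NoZeroDivisors R] {ι : Type*} (s : Finset ι)
    (f : ι → R[X]) : (∏ i ∈ s, f i).trailingCoeff = ∏ i ∈ s, (f i).trailingCoeff := by
  induction s using Finset.cons_induction with
  | empty => simp [trailingCoeff]
  | cons a s ha ih => rw [Finset.prod_cons, Finset.prod_cons, trailingCoeff_mul, ih]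

end Polynomial

open Finset Polynomial

section CharZero

variable {R : Type*} [CommRing R] [CharZero R]

theorem prod_filter_sub_natCast_eq_zero (a c : R) (m : ℕ) :
    ∏ _k ∈ (range m).filter (fun k : ℕ => a - k = 0), c = if ∃ k < m, a = k then c else 1 := by
  split_ifs with h
  · obtain ⟨k, hk, rfl⟩ := h
    suffices (range m).filter (fun j : ℕ => (k : R) - j = 0) = {k} by simp [this]
    ext j
    simp only [mem_filter, mem_range, mem_singleton, sub_eq_zero, Nat.cast_inj]
    constructor
    · rintro ⟨-, rfl⟩; rfl
    · rintro rfl; exact ⟨hk, rfl⟩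
  · refine prod_eq_one fun k hk => absurd ?_ h
    obtain ⟨hk, hak⟩ := mem_filter.1 hk
    exact ⟨k, mem_range.1 hk, sub_eq_zero.1 hak⟩

theorem trailingCoeff_prod_range [IsDomain R] (a c : R) (m : ℕ) :
    (∏ k ∈ range m, (C (a - k) + C c * X)).trailingCoeff
      = (∏ k ∈ (range m).filter (fun k : ℕ => a - k ≠ 0), (a - k))
        * if ∃ k < m, a = k then c else 1 := by
  simp_rw [trailingCoeff_prod, trailingCoeff_C_add_C_mul_X]
  rw [prod_ite, prod_filter_sub_natCast_eq_zero, mul_comm]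

end CharZero

variable {n : ℕ}

noncomputable def ffallZeroIndices (v : Fin n → ℂ) (w : Fin n → ℕ) : Finset (Fin n) :=
  univ.filter fun i => ∃ k < w i, v i = k

theorem trailingCoeff_pertFF (v b : Fin n → ℂ) (w : Fin n → ℕ) :
    (pertFF v b w).trailingCoeff = redffall v w * ∏ i ∈ ffallZeroIndices v w, b i := by
  rw [pertFF, trailingCoeff_prod]
  simp_rw [trailingCoeff_prod_range]
  rw [prod_mul_distrib, ffallZeroIndices, prod_filter]
  rfl

theorem redffall_ne_zero (v : Fin n → ℂ) (w : Fin n → ℕ) : redffall v w ≠ 0 :=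
  prod_ne_zero_iff.2 fun _ _ => prod_ne_zero_iff.2 fun _ hk => (mem_filter.1 hk).2

theorem trailingCoeff_pertFF_ne_zero {b : Fin n → ℂ} (hb : ∀ i, b i ≠ 0) (v : Fin n → ℂ)
    (w : Fin n → ℕ) : (pertFF v b w).trailingCoeff ≠ 0 := by
  rw [trailingCoeff_pertFF]
  exact mul_ne_zero (redffall_ne_zero v w) (prod_ne_zero_iff.2 fun i _ => hb i)

theorem exists_natCast_lt_toNat_neg_iff (a : ℂ) (m : ℤ) :
    (∃ k : ℕ, k < (-m).toNat ∧ a = k) ↔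
      (∃ j : ℤ, j < 0 ∧ a + m = j) ∧ ¬∃ j : ℤ, j < 0 ∧ a = j := by
  constructor
  · rintro ⟨k, hk, rfl⟩
    refine ⟨⟨k + m, by omega, by push_cast; rfl⟩, ?_⟩
    rintro ⟨j, hj, hkj⟩
    have : (k : ℤ) = j := by exact_mod_cast hkj
    omega
  · rintro ⟨⟨j, hj, ha⟩, hneg⟩
    have ha' : a = ((j - m : ℤ) : ℂ) := by push_cast; linear_combination ha
    have hjm : 0 ≤ j - m := not_lt.1 fun hlt => hneg ⟨j - m, hlt, ha'⟩
    obtain ⟨k, hk⟩ := Int.eq_ofNat_of_zero_le hjm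
    exact ⟨k, by omega, by rw [ha', hk, Int.cast_natCast]⟩

theorem ffallZeroIndices_toNat_neg (v : Fin n → ℂ) (u : Fin n → ℤ) :
    ffallZeroIndices v (fun i => (-(u i)).toNat) = nsupp (fun i => v i + u i) \ nsupp v := by
  ext i
  simp only [ffallZeroIndices, nsupp, mem_filter, mem_sdiff, mem_univ, true_and]
  exact exists_natCast_lt_toNat_neg_iff (v i) (u i)

theorem ffallZeroIndices_add_toNat (v : Fin n → ℂ) (u : Fin n → ℤ) :
    ffallZeroIndices (fun i => v i + u i) (fun i => (u i).toNat)
      = nsupp v \ nsupp (fun i => v i + u i) := by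
  simpa using ffallZeroIndices_toNat_neg (fun i => v i + u i) (-u)

theorem trailingCoeff_ratio_general {n : ℕ} (v b : Fin n → ℂ) (u : Fin n → ℤ)
    (hb : ∀ j, b j ≠ 0)
    (I₀ I : Finset (Fin n)) (hI₀ : I₀ = nsupp v)
    (hI : I = nsupp (fun i => v i + ((u i : ℤ) : ℂ))) :
    pertFF v b (fun i => (-(u i)).toNat) ≠ 0 ∧
    pertFF (fun i => v i + ((u i : ℤ) : ℂ)) b (fun i => (u i).toNat) ≠ 0 ∧
    redffall (fun i => v i + ((u i : ℤ) : ℂ)) (fun i => (u i).toNat) ≠ 0 ∧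
    (pertFF v b (fun i => (-(u i)).toNat)).trailingCoeff /
        (pertFF (fun i => v i + ((u i : ℤ) : ℂ)) b (fun i => (u i).toNat)).trailingCoeff
      = ((∏ i ∈ I \ I₀, b i) / (∏ j ∈ I₀ \ I, b j)) *
          (redffall v (fun i => (-(u i)).toNat) /
            redffall (fun i => v i + ((u i : ℤ) : ℂ)) (fun i => (u i).toNat)) := by
  subst hI₀ hI
  refine ⟨trailingCoeff_nonzero_iff_nonzero.1 (trailingCoeff_pertFF_ne_zero hb _ _),
    trailingCoeff_nonzero_iff_nonzero.1 (trailingCoeff_pertFF_ne_zero hb _ _),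
    redffall_ne_zero _ _, ?_⟩
  rw [trailingCoeff_pertFF, trailingCoeff_pertFF, ffallZeroIndices_toNat_neg,
    ffallZeroIndices_add_toNat]
  ring

/-- Corollary 5.3, leading-coefficient statement: with `I₀ = nsupp(v)` and
`I = nsupp(v+u)`, both polynomials `[v+sb]_{u₋}` and `[v+u+sb]_{u₊}` are nonzero,
`[v+u]^_{u₊} ≠ 0`, and the ratio of trailing coefficients equals
`((∏_{i∈I\I₀} b_i)/(∏_{j∈I₀\I} b_j)) · ([v]^_{u₋}/[v+u]^_{u₊})`. -/
theorem trailingCoeff_ratio {n : ℕ} (hn : 0 < n) (v b : Fin n → ℂ) (u : Fin n → ℤ)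
    (hb : ∀ j, b j ≠ 0)
    (I₀ I : Finset (Fin n)) (hI₀ : I₀ = nsupp v)
    (hI : I = nsupp (fun i => v i + ((u i : ℤ) : ℂ))) :
    pertFF v b (fun i => (-(u i)).toNat) ≠ 0 ∧
    pertFF (fun i => v i + ((u i : ℤ) : ℂ)) b (fun i => (u i).toNat) ≠ 0 ∧
    redffall (fun i => v i + ((u i : ℤ) : ℂ)) (fun i => (u i).toNat) ≠ 0 ∧
    (pertFF v b (fun i => (-(u i)).toNat)).trailingCoeff /
        (pertFF (fun i => v i + ((u i : ℤ) : ℂ)) b (fun i => (u i).toNat)).trailingCoeff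
      = ((∏ i ∈ I \ I₀, b i) / (∏ j ∈ I₀ \ I, b j)) *
          (redffall v (fun i => (-(u i)).toNat) /
            redffall (fun i => v i + ((u i : ℤ) : ℂ)) (fun i => (u i).toNat)) :=
  trailingCoeff_ratio_general v b u hb I₀ I hI₀ hI
end

section
/- Let v ∈ ℂ^n and u, u' ∈ ℤ^n with nsupp(v+u) = nsupp(v+u'). Then [v+u]_{(u'−u)₋} ≠ 0; that is, ∏_{j : u'_j < u_j} (v_j+u_j)(v_j+u_j−1)⋯(v_j+u'_j+1) ≠ 0. (This nonvanishing is the computational core of Proposition 4.1: it allows one to pass, by applying ∂^{(u'−u)₋}, from the term of exponent v+u to the term of exponent v+u' without killing the highest logarithmic term.) -/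
open scoped Classical

/-! A vanishing factor `v_i + u_i - k` of `[v+u]_{(u'-u)₋}` makes `v_i + u_i = k` a nonnegative
integer while `v_i + u'_i = k - (u_i - u'_i)` is negative, so `i` lies in `nsupp (v+u')` but
not in `nsupp (v+u)`. -/

section

variable {n : ℕ}

theorem mem_nsupp_iff {v : Fin n → ℂ} {i : Fin n} :
    i ∈ nsupp v ↔ ∃ m : ℤ, m < 0 ∧ v i = m := by
  simp [nsupp]

theorem ffall_eq_zero_iff {v : Fin n → ℂ} {w : Fin n → ℕ} :
    ffall v w = 0 ↔ ∃ i, ∃ k < w i, v i = k := by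
  simp [ffall, Finset.prod_eq_zero_iff, sub_eq_zero]

theorem notMem_nsupp_of_eq_natCast {v : Fin n → ℂ} {i : Fin n} {k : ℕ} (hk : v i = k) :
    i ∉ nsupp v := by
  rw [mem_nsupp_iff]
  rintro ⟨m, hm, hvm⟩
  have hkm : (k : ℤ) = m := by exact_mod_cast hk.symm.trans hvm
  omega

end

theorem ffall_shift_ne_zero_of_nsupp_eq_general {n : ℕ}
    (v : Fin n → ℂ) (u u' : Fin n → ℤ)
    (h : nsupp (fun i => v i + ((u i : ℤ) : ℂ)) = nsupp (fun i => v i + ((u' i : ℤ) : ℂ))) :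
    ffall (fun i => v i + ((u i : ℤ) : ℂ)) (fun i => (-(u' i - u i)).toNat) ≠ 0 := by
  rw [Ne, ffall_eq_zero_iff]
  rintro ⟨i, k, hk, hvk⟩
  have hmem : i ∈ nsupp (fun i => v i + ((u' i : ℤ) : ℂ)) := by
    refine mem_nsupp_iff.2 ⟨k - (u i - u' i), by omega, ?_⟩
    push_cast
    linear_combination hvk
  exact notMem_nsupp_of_eq_natCast hvk (h ▸ hmem)

/-- computational core of Proposition 4.1: if
`nsupp(v+u) = nsupp(v+u')`, then `[v+u]_{(u'−u)₋} ≠ 0`. -/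
theorem ffall_shift_ne_zero_of_nsupp_eq {n : ℕ} (hn : 0 < n)
    (v : Fin n → ℂ) (u u' : Fin n → ℤ)
    (h : nsupp (fun i => v i + ((u i : ℤ) : ℂ)) = nsupp (fun i => v i + ((u' i : ℤ) : ℂ))) :
    ffall (fun i => v i + ((u i : ℤ) : ℂ)) (fun i => (-(u' i - u i)).toNat) ≠ 0 :=
  ffall_shift_ne_zero_of_nsupp_eq_general v u u' h
end

section
/- Let v ∈ ℂ^n, let b^{(1)}, …, b^{(l)} ∈ ℂ^n, and let u, u' ∈ ℤ^n. Set I₀ = nsupp(v), I = nsupp(v+u), J = nsupp(v+u−u'), ℓ_i = Σ_{j=1}^l b_i^{(j)} s_j, and define Q₋ = ∏_{i=1}^n ∏_{k=0}^{(u₋)_i−1} (v_i − k + ℓ_i) and Q'₊ = ∏_{i=1}^n ∏_{k=0}^{(u'₊)_i−1} (v_i + u_i − k + ℓ_i) in ℂ[s₁,…,s_l]. Then the sets I\I₀ and J\I are disjoint; every homogeneous component of the product Q₋ · Q'₊ of total degree < |I\I₀| + |J\I| is zero; and its homogeneous component of degree |I\I₀| + |J\I| equals [v]^_{u₋} ·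 [v+u]^_{u'₊} · ∏_{i ∈ (I\I₀) ∪ (J\I)} ℓ_i. (This is the computation establishing display (13) in the proof of Theorem 6.2.) -/
open scoped Classical

/-- The linear form `ℓ_i = Σ_j b_i^{(j)} s_j` in `ℂ[s₁,…,s_l]`. -/
noncomputable def ell {n l : ℕ} (b : Fin l → Fin n → ℂ) (i : Fin n) :
    MvPolynomial (Fin l) ℂ :=
  ∑ j, MvPolynomial.C (b j i) * MvPolynomial.X j

/-- The multivariate perturbed falling factorial
`∏_i ∏_{k=0}^{u_i−1} (v_i − k + ℓ_i)` in `ℂ[s₁,…,s_l]`. -/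
noncomputable def pertFFmv {n l : ℕ} (v : Fin n → ℂ) (b : Fin l → Fin n → ℂ)
    (u : Fin n → ℕ) : MvPolynomial (Fin l) ℂ :=
  ∏ i, ∏ k ∈ Finset.range (u i), (MvPolynomial.C (v i - (k : ℂ)) + ell b i)

/-!
A factor `C c + ℓ` with `ℓ` homogeneous linear has lowest homogeneous component `C c` in degree
`0` if `c ≠ 0`, and `ℓ` in degree `1` if `c = 0`; lowest components multiply. Hence the lowest
component of `Q₋ · Q'₊` sits in degree the number of vanishing constants `v_i - k`, and is the
product of the nonvanishing ones (the reduced falling factorials) times the matching `ℓ_i`.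
For an integer `t`, some `k < t` has `v_i - k = 0` exactly when `v_i - t` is a negative integer
but `v_i` is not, and then `k` is unique; this is how `I \ I₀` and `J \ I` appear.
-/

open MvPolynomial Finset

namespace MvPolynomial

variable {σ R : Type*} [CommSemiring R]

section

attribute [local instance] MvPolynomial.gradedAlgebra

theorem homogeneousComponent_mul (P Q : MvPolynomial σ R) (m : ℕ) :
    homogeneousComponent m (P * Q) =
      ∑ ij ∈ antidiagonal m, homogeneousComponent ij.1 P * homogeneousComponent ij.2 Q := by
  simp only [← decomposition.decompose'_apply]
  change (DirectSum.decompose (homogeneousSubmodule σ R) (P * Q) m : MvPolynomial σ R) = _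
  rw [DirectSum.decompose_mul, DirectSum.coe_mul_apply_eq_sum_antidiagonal]
  rfl

end

/-- `A` may be zero: this only says that `P` agrees with `A` in all degrees up to `d`. -/
def HasLowestComponent (P : MvPolynomial σ R) (d : ℕ) (A : MvPolynomial σ R) : Prop :=
  (∀ m < d, homogeneousComponent m P = 0) ∧ homogeneousComponent d P = A

namespace HasLowestComponent

variable {P Q A B : MvPolynomial σ R} {d e : ℕ}

theorem homogeneousComponent_mul_of_le (hP : P.HasLowestComponent d A)
    (hQ : Q.HasLowestComponent e B) {m : ℕ} (hm : m ≤ d + e) :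
    homogeneousComponent m (P * Q) = if d + e = m then A * B else 0 := by
  have hterm : ∀ ij ∈ antidiagonal m, homogeneousComponent ij.1 P * homogeneousComponent ij.2 Q
      = if (d, e) = ij then A * B else 0 := by
    rintro ⟨i, j⟩ hij
    rw [HasAntidiagonal.mem_antidiagonal] at hij
    by_cases hi : i < d
    · rw [hP.1 i hi, zero_mul, if_neg (by grind)]
    by_cases hj : j < e
    · rw [hQ.1 j hj, mul_zero, if_neg (by grind)]
    obtain rfl : i = d := by omega
    obtain rfl : j = e := by omega
    rw [hP.2, hQ.2, if_pos rfl]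
  rw [homogeneousComponent_mul, sum_congr rfl hterm, sum_ite_eq]
  simp only [HasAntidiagonal.mem_antidiagonal]

theorem mul (hP : P.HasLowestComponent d A) (hQ : Q.HasLowestComponent e B) :
    (P * Q).HasLowestComponent (d + e) (A * B) :=
  ⟨fun m hm => by rw [hP.homogeneousComponent_mul_of_le hQ hm.le, if_neg hm.ne'],
    by rw [hP.homogeneousComponent_mul_of_le hQ le_rfl, if_pos rfl]⟩

theorem one : (1 : MvPolynomial σ R).HasLowestComponent 0 1 :=
  ⟨fun _ h => absurd h (Nat.not_lt_zero _), by simp⟩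

theorem prod {ι : Type*} (s : Finset ι) {P A : ι → MvPolynomial σ R} {d : ι → ℕ}
    (h : ∀ i ∈ s, (P i).HasLowestComponent (d i) (A i)) :
    (∏ i ∈ s, P i).HasLowestComponent (∑ i ∈ s, d i) (∏ i ∈ s, A i) := by
  induction s using Finset.induction_on with
  | empty => simpa using one
  | insert a s ha ih =>
    rw [prod_insert ha, sum_insert ha, prod_insert ha]
    exact (h a (mem_insert_self a s)).mul (ih fun i hi => h i (mem_insert_of_mem hi))

end HasLowestComponent

theorem hasLowestComponent_C_add [DecidableEq R] (c : R) {L : MvPolynomial σ R}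
    (hL : L.IsHomogeneous 1) :
    (C c + L).HasLowestComponent (if c = 0 then 1 else 0) (if c = 0 then L else C c) := by
  split_ifs with hc
  · refine ⟨fun m hm => ?_, ?_⟩
    · rw [hc, map_zero, zero_add, homogeneousComponent_of_mem hL, if_neg (by omega)]
    · rw [hc, map_zero, zero_add, homogeneousComponent_eq_self hL]
  · refine ⟨fun m hm => absurd hm (Nat.not_lt_zero _), ?_⟩
    rw [map_add, homogeneousComponent_of_mem hL, if_neg zero_ne_one, add_zero,
      homogeneousComponent_of_mem (isHomogeneous_C σ c), if_pos rfl]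

end MvPolynomial

theorem ell_isHomogeneous {n l : ℕ} (b : Fin l → Fin n → ℂ) (i : Fin n) :
    (ell b i).IsHomogeneous 1 :=
  IsHomogeneous.sum _ _ _ fun j _ => by
    simpa using (isHomogeneous_C (Fin l) (b j i)).mul (isHomogeneous_X ℂ j)

theorem pertFFmv_hasLowestComponent {n l : ℕ} (v : Fin n → ℂ) (b : Fin l → Fin n → ℂ)
    (u : Fin n → ℕ) :
    (pertFFmv v b u).HasLowestComponent (∑ i, #((range (u i)).filter fun k : ℕ => v i - k = 0))
      (C (redffall v u) * ∏ i, ell b i ^ #((range (u i)).filter fun k : ℕ => v i - k = 0)) := by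
  convert HasLowestComponent.prod univ fun i _ => HasLowestComponent.prod (range (u i))
    fun k _ => hasLowestComponent_C_add (v i - k) (ell_isHomogeneous b i) using 1
  · rfl
  · simp only [card_filter]
  · rw [redffall, map_prod, ← prod_mul_distrib]
    refine prod_congr rfl fun i _ => ?_
    rw [prod_ite, prod_const, map_prod, mul_comm]

theorem card_filter_range_sub_eq_zero {K : Type*} [Ring K] [CharZero K] (x : K) (t : ℤ) :
    #((range t.toNat).filter fun k : ℕ => x - k = 0) =
      if ∃ k : ℕ, (k : ℤ) < t ∧ x = k then 1 else 0 := by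
  split_ifs with h
  · obtain ⟨k, hk, rfl⟩ := h
    rw [card_eq_one]
    refine ⟨k, ext fun j => ?_⟩
    simp only [mem_filter, mem_range, sub_eq_zero, Nat.cast_inj, mem_singleton]
    omega
  · rw [card_eq_zero, filter_eq_empty_iff]
    intro j hj hj0
    exact h ⟨j, by rw [mem_range] at hj; omega, sub_eq_zero.mp hj0⟩

theorem exists_nat_lt_and_eq_iff {K : Type*} [Ring K] [CharZero K] (x : K) (t : ℤ) :
    (∃ k : ℕ, (k : ℤ) < t ∧ x = k) ↔
      (∃ m : ℤ, m < 0 ∧ x - t = m) ∧ ¬∃ m : ℤ, m < 0 ∧ x = m := by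
  constructor
  · rintro ⟨k, hk, rfl⟩
    refine ⟨⟨k - t, by omega, by push_cast; rfl⟩, ?_⟩
    rintro ⟨m, hm, hkm⟩
    have : (k : ℤ) = m := by exact_mod_cast hkm
    omega
  · rintro ⟨⟨m, hm, hx⟩, hx_nonneg⟩
    have hx : x = ((m + t : ℤ) : K) := by rw [Int.cast_add, ← hx, sub_add_cancel]
    have hmt : 0 ≤ m + t := by
      by_contra hneg
      exact hx_nonneg ⟨m + t, by omega, hx⟩
    exact ⟨(m + t).toNat, by omega, by rw [hx]; exact_mod_cast (Int.toNat_of_nonneg hmt).symm⟩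

theorem mem_nsupp_sub_sdiff_nsupp {n : ℕ} (v : Fin n → ℂ) (t : Fin n → ℤ) (i : Fin n) :
    i ∈ nsupp (fun i => v i - t i) \ nsupp v ↔ ∃ k : ℕ, (k : ℤ) < t i ∧ v i = k := by
  simp only [exists_nat_lt_and_eq_iff, nsupp, mem_sdiff, mem_filter, mem_univ, true_and]

theorem pertFFmv_toNat_hasLowestComponent {n l : ℕ} (v : Fin n → ℂ) (b : Fin l → Fin n → ℂ)
    (t : Fin n → ℤ) :
    (pertFFmv v b fun i => (t i).toNat).HasLowestComponent
      #(nsupp (fun i => v i - t i) \ nsupp v)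
      (C (redffall v fun i => (t i).toNat) *
        ∏ i ∈ nsupp (fun i => v i - t i) \ nsupp v, ell b i) := by
  have hcard (i : Fin n) : #((range (t i).toNat).filter fun k : ℕ => v i - k = 0) =
      if i ∈ nsupp (fun i => v i - t i) \ nsupp v then 1 else 0 := by
    rw [card_filter_range_sub_eq_zero]
    exact if_congr (mem_nsupp_sub_sdiff_nsupp v t i).symm rfl rfl
  convert pertFFmv_hasLowestComponent v b fun i => (t i).toNat using 2
  · simp only [hcard, sum_boole, Nat.cast_id, filter_mem_eq_inter, univ_inter]
  · simp only [hcard, pow_ite, pow_one, pow_zero, prod_ite_mem, univ_inter]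

theorem pertFFmv_critical_term_lowest_component_general {n l : ℕ}
    (v : Fin n → ℂ) (b : Fin l → Fin n → ℂ) (u u' : Fin n → ℤ)
    (I₀ I J : Finset (Fin n)) (hI₀ : I₀ = nsupp v)
    (hI : I = nsupp (fun i => v i + ((u i : ℤ) : ℂ)))
    (hJ : J = nsupp (fun i => v i + ((u i - u' i : ℤ) : ℂ))) :
    Disjoint (I \ I₀) (J \ I) ∧
    (∀ m < (I \ I₀).card + (J \ I).card,
      MvPolynomial.homogeneousComponent m
        (pertFFmv v b (fun i => (-(u i)).toNat) *
          pertFFmv (fun i => v i + ((u i : ℤ) : ℂ)) b (fun i => (u' i).toNat)) = 0) ∧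
    MvPolynomial.homogeneousComponent ((I \ I₀).card + (J \ I).card)
        (pertFFmv v b (fun i => (-(u i)).toNat) *
          pertFFmv (fun i => v i + ((u i : ℤ) : ℂ)) b (fun i => (u' i).toNat)) =
      MvPolynomial.C
          (redffall v (fun i => (-(u i)).toNat) *
            redffall (fun i => v i + ((u i : ℤ) : ℂ)) (fun i => (u' i).toNat)) *
        ∏ i ∈ (I \ I₀) ∪ (J \ I), ell b i := by
  have hdisj : Disjoint (I \ I₀) (J \ I) := disjoint_sdiff.mono_left sdiff_subset
  have hI' : nsupp (fun i => v i - ((-u i : ℤ) : ℂ)) = I := by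
    rw [hI]; congr; funext i; push_cast; ring
  have hJ' : nsupp (fun i => (v i + (u i : ℂ)) - (u' i : ℂ)) = J := by
    rw [hJ]; congr; funext i; push_cast; ring
  have h₁ := pertFFmv_toNat_hasLowestComponent v b fun i => -u i
  have h₂ := pertFFmv_toNat_hasLowestComponent (fun i => v i + u i) b u'
  rw [hI', ← hI₀] at h₁
  rw [hJ', ← hI] at h₂
  obtain ⟨hlow, htop⟩ := h₁.mul h₂
  refine ⟨hdisj, hlow, ?_⟩
  rw [htop, prod_union hdisj, map_mul]
  ring

/-- the computation establishing display (13) in the proof of Theorem 6.2: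
with `I₀ = nsupp(v)`, `I = nsupp(v+u)`, `J = nsupp(v+u−u')`, the sets `I\I₀` and `J\I`
are disjoint; every homogeneous component of `Q₋ · Q'₊` of total degree
`< |I\I₀| + |J\I|` vanishes; and the component of degree `|I\I₀| + |J\I|` equals
`[v]^_{u₋} · [v+u]^_{u'₊} · ∏_{i ∈ (I\I₀) ∪ (J\I)} ℓ_i`. -/
theorem pertFFmv_critical_term_lowest_component {n l : ℕ} (hn : 0 < n) (hl : 0 < l)
    (v : Fin n → ℂ) (b : Fin l → Fin n → ℂ) (u u' : Fin n → ℤ)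
    (I₀ I J : Finset (Fin n)) (hI₀ : I₀ = nsupp v)
    (hI : I = nsupp (fun i => v i + ((u i : ℤ) : ℂ)))
    (hJ : J = nsupp (fun i => v i + ((u i - u' i : ℤ) : ℂ))) :
    Disjoint (I \ I₀) (J \ I) ∧
    (∀ m < (I \ I₀).card + (J \ I).card,
      MvPolynomial.homogeneousComponent m
        (pertFFmv v b (fun i => (-(u i)).toNat) *
          pertFFmv (fun i => v i + ((u i : ℤ) : ℂ)) b (fun i => (u' i).toNat)) = 0) ∧
    MvPolynomial.homogeneousComponent ((I \ I₀).card + (J \ I).card)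
        (pertFFmv v b (fun i => (-(u i)).toNat) *
          pertFFmv (fun i => v i + ((u i : ℤ) : ℂ)) b (fun i => (u' i).toNat)) =
      MvPolynomial.C
          (redffall v (fun i => (-(u i)).toNat) *
            redffall (fun i => v i + ((u i : ℤ) : ℂ)) (fun i => (u' i).toNat)) *
        ∏ i ∈ (I \ I₀) ∪ (J \ I), ell b i :=
  pertFFmv_critical_term_lowest_component_general v b u u' I₀ I J hI₀ hI hJ
end
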